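/- Let J_k = ((1−2^{1−k})/9, (1−2^{−k})/9) for k ≥ 1, so that |J_k| = 2^{−k}/9. If measurable sets I₁, I₂, … ⊆ [0, 2/9], each of measure 1/9, satisfy that for every k almost every y ∈ I_k has 1/9 − y/2 ≥ ∑_{j ≤ k, y ∈ I_j} |J_j|, then for every k, I_k equals ⋃_{i=1}^{2^{k−1}} [(2i−2)/(9·2^{k−1}), (2i−1)/(9·2^{k−1})] up to a null set. -/

import Mathlib

open MeasureTheory
open scoped Classical

/-- The dyadic "Rademacher" sets
`R_k = ⋃_{i=1}^{2^{k−1}} [(2i−2)/(9·2^{k−1}), (2i−1)/(9·2^{k−1})] ⊆ [0, 2/9]`. -/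
noncomputable def Rset (k : ℕ) : Set ℝ :=
  ⋃ i ∈ Finset.Icc 1 (2 ^ (k - 1)),
    Set.Icc (((2 * i : ℕ) - 2 : ℝ) / (9 * 2 ^ (k - 1))) (((2 * i : ℕ) - 1 : ℝ) / (9 * 2 ^ (k - 1)))

lemma Rset_meas (k : ℕ) : MeasurableSet (Rset k) :=
  MeasurableSet.biUnion (Finset.countable_toSet _) fun _ _ => measurableSet_Icc

/-- The countable set of "bad" (dyadic) points. -/
def badSet : Set ℝ := {y | ∃ n : ℕ, ∃ m : ℤ, 9 * y * 2 ^ n = (m : ℝ)}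

lemma badSet_null : volume badSet = 0 := by
  have hc : badSet.Countable := by
    have hsub : badSet ⊆ Set.range (fun p : ℕ × ℤ => (p.2 : ℝ) / (9 * 2 ^ p.1)) := by
      rintro y ⟨n, m, h⟩
      refine ⟨(n, m), ?_⟩
      have h9 : (0:ℝ) < 9 * 2 ^ n := by positivity
      field_simp
      linarith [h]
    exact (Set.countable_range _).mono hsub
  exact hc.measure_zero _

lemma two_pow_mul_not_int (y : ℝ) (hy : y ∉ badSet) (n : ℕ) (m : ℤ) :
    2 ^ n * (9 * y / 2) ≠ (m : ℝ) := by
  intro h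
  cases n with
  | zero =>
    refine hy ⟨0, 2 * m, ?_⟩
    push_cast
    nlinarith [h]
  | succ s =>
    refine hy ⟨s, m, ?_⟩
    rw [pow_succ] at h
    nlinarith [h]

lemma mem_Rset_iff (k : ℕ) (hk : 1 ≤ k) (y : ℝ) (hy : y ∈ Set.Icc 0 (2/9))
    (hnd : y ∉ badSet) : y ∈ Rset k ↔ Even ⌊2 ^ k * (9 * y / 2)⌋ := by
  obtain ⟨K, rfl⟩ : ∃ K, k = K + 1 := ⟨k - 1, by omega⟩
  have hK1 : (K + 1) - 1 = K := by omega
  have hD : (0:ℝ) < 9 * 2 ^ K := by positivity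
  have heq : (2:ℝ) ^ (K+1) * (9 * y / 2) = 9 * y * 2 ^ K := by ring
  constructor
  · intro hmem
    simp only [Rset, hK1, Set.mem_iUnion] at hmem
    obtain ⟨i, hi, hyi⟩ := hmem
    obtain ⟨hi1, hi2⟩ := Finset.mem_Icc.mp hi
    obtain ⟨hl, hr⟩ := hyi
    have hlow : 2*(i:ℝ) - 2 ≤ 9 * y * 2 ^ K := by
      rw [div_le_iff₀ hD] at hl; push_cast at hl; linarith
    have hhigh : 9 * y * 2 ^ K ≤ 2*(i:ℝ) - 1 := by
      rw [le_div_iff₀ hD] at hr; push_cast at hr; linarith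
    have hne2 : 9 * y * 2 ^ K ≠ ((2*(i:ℤ) - 1 : ℤ):ℝ) := by
      rw [← heq]; exact two_pow_mul_not_int y hnd (K+1) _
    have hhigh' : 9 * y * 2 ^ K < 2*(i:ℝ) - 1 :=
      lt_of_le_of_ne hhigh (by intro hcon; apply hne2; push_cast; linarith)
    have hfl : ⌊2 ^ (K+1) * (9 * y / 2)⌋ = 2*(i:ℤ) - 2 := by
      rw [heq, Int.floor_eq_iff]
      constructor
      · push_cast; linarith
      · push_cast; linarith
    rw [hfl]
    exact ⟨(i:ℤ) - 1, by ring⟩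
  · intro hev
    obtain ⟨m, hm⟩ := hev
    have hfl : ⌊9 * y * 2 ^ K⌋ = m + m := by rw [← heq, hm]
    have hub : 9 * y * 2 ^ K < (m:ℝ) + m + 1 := by
      have := Int.lt_floor_add_one (9 * y * 2 ^ K)
      rw [hfl] at this; push_cast at this; linarith
    have hlb : ((m:ℝ) + m) ≤ 9 * y * 2 ^ K := by
      have := Int.floor_le (9 * y * 2 ^ K)
      rw [hfl] at this; push_cast at this; linarith
    have hy0 : 0 ≤ 9 * y * 2 ^ K := by
      have := hy.1; positivity
    have ht1 : y < 2/9 := by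
      rcases lt_or_eq_of_le hy.2 with h | h
      · exact h
      · exfalso
        exact two_pow_mul_not_int y hnd 0 1 (by rw [h]; norm_num)
    have hm0 : 0 ≤ m := by
      by_contra hneg
      push_neg at hneg
      have hm1 : m ≤ -1 := by omega
      have : (m:ℝ) ≤ -1 := by exact_mod_cast hm1
      linarith
    have hmlt : m < 2 ^ K := by
      have hstep : (m:ℝ) + m < 9 * (2/9) * 2 ^ K := by nlinarith
      have : (m:ℝ) + m < 2 * 2 ^ K := by linarith [hstep]
      have h2 : (m:ℝ) < 2 ^ K := by linarith
      exact_mod_cast h2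
    have h1 : (m.toNat : ℤ) = m := Int.toNat_of_nonneg hm0
    have hmtn : ((m.toNat : ℕ) : ℝ) = (m : ℝ) := by exact_mod_cast congrArg (fun z : ℤ => (z : ℝ)) h1
    have h3 : m.toNat < 2 ^ K := by
      have h2 : ((m.toNat : ℤ)) < ((2 ^ K : ℕ) : ℤ) := by rw [h1]; push_cast; exact hmlt
      exact_mod_cast h2
    simp only [Rset, hK1, Set.mem_iUnion]
    refine ⟨m.toNat + 1, Finset.mem_Icc.mpr ⟨by omega, by omega⟩, ?_, ?_⟩
    · rw [div_le_iff₀ hD]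
      push_cast
      linarith [hmtn, hlb]
    · rw [le_div_iff₀ hD]
      push_cast
      linarith [hmtn, hub]

lemma floor_double (x : ℝ) : ⌊2*x⌋ = 2*⌊x⌋ ∨ ⌊2*x⌋ = 2*⌊x⌋+1 := by
  have h1 : (2*⌊x⌋ : ℤ) ≤ ⌊2*x⌋ := by
    apply Int.le_floor.2; push_cast; linarith [Int.floor_le x]
  have h2 : ⌊2*x⌋ < 2*⌊x⌋+2 := by
    apply Int.floor_lt.2; push_cast; linarith [Int.lt_floor_add_one x]
  omega

lemma sum_even_floor (t : ℝ) (K : ℕ) :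
    ∑ j ∈ Finset.Icc 1 K, (if Even ⌊2^j * t⌋ then ((1/2:ℝ))^j else 0)
      = (1 - (1/2)^K) - ((⌊2^K * t⌋ : ℝ)/2^K - (⌊t⌋ : ℝ)) := by
  induction K with
  | zero => simp
  | succ K ih =>
    rw [Finset.sum_Icc_succ_top (by omega : 1 ≤ K + 1), ih]
    have h2 : (2:ℝ)^(K+1) * t = 2*(2^K*t) := by ring
    have h2K : (0:ℝ) < 2^K := by positivity
    rcases floor_double (2^K * t) with h | h
    · rw [if_pos (by rw [h2, h]; exact even_two_mul _)]
      rw [h2, h]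
      push_cast
      field_simp
      ring
    · rw [if_neg (by rw [h2, h, Int.even_iff]; omega)]
      rw [h2, h]
      push_cast
      field_simp
      have hp : (1/2:ℝ)^K * 2^K = 1 := by rw [← mul_pow]; norm_num
      linear_combination (-(2:ℝ)^K) * hp

lemma key_step (K : ℕ) (y : ℝ) (hy : y ∈ Set.Icc 0 (2/9)) (hnd : y ∉ badSet)
    (h : (∑ j ∈ Finset.Icc 1 K, if y ∈ Rset j then ((1/2:ℝ)^j / 9) else 0) + (1/2)^(K+1)/9
        ≤ 1/9 - y/2) :
    y ∈ Rset (K+1) := by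
  set t : ℝ := 9 * y / 2 with htdef
  have ht0 : 0 ≤ t := by have := hy.1; positivity
  have ht1 : t < 1 := by
    rcases lt_or_eq_of_le hy.2 with hlt | heq
    · rw [htdef]; linarith
    · exfalso; exact two_pow_mul_not_int y hnd 0 1 (by rw [heq]; norm_num)
  have hfl0 : ⌊t⌋ = 0 := Int.floor_eq_zero_iff.2 ⟨ht0, ht1⟩
  have hy2 : y/2 = t/9 := by rw [htdef]; ring
  have hsum : (∑ j ∈ Finset.Icc 1 K, if y ∈ Rset j then ((1/2:ℝ)^j / 9) else 0)
      = (1/9) * ∑ j ∈ Finset.Icc 1 K, (if Even ⌊2^j * t⌋ then ((1/2:ℝ))^j else 0) := by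
    rw [Finset.mul_sum]
    apply Finset.sum_congr rfl
    intro j hj
    rw [mem_Rset_iff j (Finset.mem_Icc.mp hj).1 y hy hnd]
    split <;> ring
  rw [hsum, sum_even_floor, hfl0] at h
  push_cast at h
  set n : ℤ := ⌊2^K * t⌋ with hndef
  have hn0 : (n:ℝ) ≤ 2^K * t := Int.floor_le _
  have h2K : (0:ℝ) < 2^K := by positivity
  have hp : (1/2:ℝ)^(K+1) = (1/2)^K/2 := by rw [pow_succ]; ring
  have hpow : (1/2:ℝ)^K * 2^K = 1 := by
    rw [← mul_pow]; norm_num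
  -- h gives: t ≤ n/2^K + (1/2)^{K+1}
  have h' : t ≤ (n:ℝ)/2^K + (1/2)^(K+1) := by
    linarith [h, hp, hy2]
  have hub : 2^(K+1) * t ≤ 2*(n:ℝ)+1 := by
    have e1 : ((n:ℝ)/2^K) * 2^(K+1) = 2*n := by field_simp; ring
    have e2 : ((1/2:ℝ)^(K+1)) * 2^(K+1) = 1 := by rw [← mul_pow]; norm_num
    have hmul := mul_le_mul_of_nonneg_right h' (by positivity : (0:ℝ) ≤ 2^(K+1))
    calc (2:ℝ)^(K+1)*t = t*2^(K+1) := by ring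
      _ ≤ ((n:ℝ)/2^K + (1/2)^(K+1))*2^(K+1) := hmul
      _ = ((n:ℝ)/2^K)*2^(K+1) + ((1/2)^(K+1))*2^(K+1) := by ring
      _ = 2*(n:ℝ) + 1 := by rw [e1, e2]
  have hne : 2^(K+1) * t ≠ ((2*n+1 : ℤ):ℝ) := two_pow_mul_not_int y hnd (K+1) _
  have hub' : 2^(K+1) * t < 2*(n:ℝ)+1 := by
    rcases lt_or_eq_of_le hub with hlt | heq
    · exact hlt
    · exact absurd (by push_cast; linarith [heq]) hne
  have hlb : 2*(n:ℝ) ≤ 2^(K+1) * t := by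
    have : (2:ℝ)^(K+1) * t = 2 * (2^K * t) := by ring
    rw [this]; linarith
  have hfl : ⌊2^(K+1) * t⌋ = 2*n := by
    rw [Int.floor_eq_iff]
    constructor
    · push_cast; linarith
    · push_cast; linarith
  rw [mem_Rset_iff (K+1) (by omega) y hy hnd, hfl]
  exact ⟨n, by ring⟩

lemma vol_Rset (k : ℕ) : volume (Rset k) = ENNReal.ofReal (1/9) := by
  set K := k - 1 with hK
  have hD : (0:ℝ) < 9 * 2 ^ K := by positivity
  have hdisj : (↑(Finset.Icc 1 (2^K)) : Set ℕ).PairwiseDisjoint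
      (fun i : ℕ => Set.Icc (((2 * i : ℕ) - 2 : ℝ) / (9 * 2 ^ K)) (((2 * i : ℕ) - 1 : ℝ) / (9 * 2 ^ K))) := by
    intro i _ j _ hij
    have key : ∀ a b : ℕ, a < b → Disjoint
        (Set.Icc (((2 * a : ℕ) - 2 : ℝ) / (9 * 2 ^ K)) (((2 * a : ℕ) - 1 : ℝ) / (9 * 2 ^ K)))
        (Set.Icc (((2 * b : ℕ) - 2 : ℝ) / (9 * 2 ^ K)) (((2 * b : ℕ) - 1 : ℝ) / (9 * 2 ^ K))) := by
      intro a b hab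
      rw [Set.disjoint_iff_inter_eq_empty, Set.Icc_inter_Icc]
      apply Set.Icc_eq_empty
      rw [not_le]
      have hcast : (a:ℝ) + 1 ≤ (b:ℝ) := by exact_mod_cast hab
      have h1 : min (((2 * a : ℕ) - 1 : ℝ) / (9 * 2 ^ K)) (((2 * b : ℕ) - 1 : ℝ) / (9 * 2 ^ K))
          ≤ ((2 * a : ℕ) - 1 : ℝ) / (9 * 2 ^ K) := min_le_left _ _
      have h2 : ((2 * b : ℕ) - 2 : ℝ) / (9 * 2 ^ K)
          ≤ max (((2 * a : ℕ) - 2 : ℝ) / (9 * 2 ^ K)) (((2 * b : ℕ) - 2 : ℝ) / (9 * 2 ^ K)) := le_max_right _ _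
      have h3 : ((2 * a : ℕ) - 1 : ℝ) / (9 * 2 ^ K) < ((2 * b : ℕ) - 2 : ℝ) / (9 * 2 ^ K) := by
        rw [div_lt_div_iff₀ hD hD]
        push_cast
        nlinarith [hcast, hD]
      calc min (((2 * a : ℕ) - 1 : ℝ) / (9 * 2 ^ K)) (((2 * b : ℕ) - 1 : ℝ) / (9 * 2 ^ K))
          ≤ ((2 * a : ℕ) - 1 : ℝ) / (9 * 2 ^ K) := h1
        _ < ((2 * b : ℕ) - 2 : ℝ) / (9 * 2 ^ K) := h3
        _ ≤ max (((2 * a : ℕ) - 2 : ℝ) / (9 * 2 ^ K)) (((2 * b : ℕ) - 2 : ℝ) / (9 * 2 ^ K)) := h2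
    rcases lt_or_gt_of_ne hij with h | h
    · exact key i j h
    · exact (key j i h).symm
  have hvol : volume (Rset k) = ∑ i ∈ Finset.Icc 1 (2^K),
      volume (Set.Icc (((2 * i : ℕ) - 2 : ℝ) / (9 * 2 ^ K)) (((2 * i : ℕ) - 1 : ℝ) / (9 * 2 ^ K))) := by
    rw [Rset, ← hK]
    exact measure_biUnion_finset hdisj (fun i _ => measurableSet_Icc)
  rw [hvol]
  have hconst : ∀ i ∈ Finset.Icc 1 (2^K),
      volume (Set.Icc (((2 * i : ℕ) - 2 : ℝ) / (9 * 2 ^ K)) (((2 * i : ℕ) - 1 : ℝ) / (9 * 2 ^ K)))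
        = ENNReal.ofReal (1 / (9 * 2 ^ K)) := by
    intro i _
    rw [Real.volume_Icc]
    congr 1
    field_simp
    ring
  rw [Finset.sum_congr rfl hconst, Finset.sum_const, Nat.card_Icc]
  simp only [Nat.add_sub_cancel]
  rw [nsmul_eq_mul, ← ENNReal.ofReal_natCast, ← ENNReal.ofReal_mul (by positivity)]
  congr 1
  push_cast
  field_simp

/-- Inductive identification of the `A × C` block: if measurable sets
`I₁, I₂, … ⊆ [0, 2/9]`, each of measure `1/9`, satisfy that for every `k ≥ 1` almost
every `y ∈ I_k` has `1/9 − y/2 ≥ ∑_{j ≤ k, y ∈ I_j} 2^{−j}/9`, then each `I_k` equals the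
dyadic Rademacher set `R_k` up to a null set. -/
theorem dyadic_identification
    (I : ℕ → Set ℝ) (hmeas : ∀ k, MeasurableSet (I k))
    (hsub : ∀ k, 1 ≤ k → I k ⊆ Set.Icc 0 (2/9))
    (hvol : ∀ k, 1 ≤ k → volume (I k) = ENNReal.ofReal (1/9))
    (hcap : ∀ k : ℕ, 1 ≤ k → ∀ᵐ y ∂(volume.restrict (I k)),
      (∑ j ∈ Finset.Icc 1 k, if y ∈ I j then ((1/2:ℝ)^j / 9) else 0) ≤ 1/9 - y/2) :
    ∀ k : ℕ, 1 ≤ k → volume ((I k \ Rset k) ∪ (Rset k \ I k)) = 0 := by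
  intro k
  induction k using Nat.strong_induction_on with
  | _ k IH =>
  intro hk
  obtain ⟨K, rfl⟩ : ∃ K, k = K + 1 := ⟨k - 1, by omega⟩
  have hA : volume (I (K+1) \ Rset (K+1)) = 0 := by
    have hae1 : ∀ᵐ y ∂(volume.restrict (I (K+1))), y ∈ I (K+1) := ae_restrict_mem (hmeas _)
    have hbad : ∀ᵐ y ∂(volume.restrict (I (K+1))), y ∉ badSet :=
      ae_restrict_of_ae (measure_eq_zero_iff_ae_notMem.1 badSet_null)
    have hIH : ∀ᵐ y ∂(volume.restrict (I (K+1))),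
        ∀ j ∈ Finset.Icc 1 K, (y ∈ I j ↔ y ∈ Rset j) := by
      apply ae_restrict_of_ae
      rw [Finset.eventually_all]
      intro j hj
      obtain ⟨hj1, hj2⟩ := Finset.mem_Icc.mp hj
      have hnull := measure_eq_zero_iff_ae_notMem.1 (IH j (by omega) hj1)
      filter_upwards [hnull] with y hy
      simp only [Set.mem_union, Set.mem_diff] at hy
      tauto
    have hcap' := hcap (K+1) (by omega)
    have hmem : ∀ᵐ y ∂(volume.restrict (I (K+1))), y ∈ Rset (K+1) := by
      filter_upwards [hae1, hbad, hIH, hcap'] with y h1 h2 h3 h4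
      apply key_step K y (hsub _ (by omega) h1) h2
      rw [Finset.sum_Icc_succ_top (by omega : 1 ≤ K + 1)] at h4
      rw [if_pos h1] at h4
      have hcg : (∑ j ∈ Finset.Icc 1 K, if y ∈ I j then ((1/2:ℝ)^j / 9) else 0)
          = ∑ j ∈ Finset.Icc 1 K, if y ∈ Rset j then ((1/2:ℝ)^j / 9) else 0 := by
        apply Finset.sum_congr rfl
        intro j hj
        rw [h3 j hj]
      rw [hcg] at h4
      exact h4
    have h0 : (volume.restrict (I (K+1))) ((Rset (K+1))ᶜ) = 0 := ae_iff.mp hmem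
    rw [Measure.restrict_apply (Rset_meas (K+1)).compl] at h0
    rw [Set.diff_eq, Set.inter_comm]
    exact h0
  have hB : volume (Rset (K+1) \ I (K+1)) = 0 := by
    have hI := hvol (K+1) (by omega)
    have hR := vol_Rset (K+1)
    have e1 : volume (I (K+1) \ Rset (K+1)) + volume (I (K+1) ∩ Rset (K+1)) = volume (I (K+1)) :=
      measure_diff_add_inter _ (Rset_meas (K+1))
    have e2 : volume (Rset (K+1) \ I (K+1)) + volume (Rset (K+1) ∩ I (K+1)) = volume (Rset (K+1)) :=
      measure_diff_add_inter _ (hmeas (K+1))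
    rw [hA, zero_add, hI] at e1
    rw [Set.inter_comm, e1, hR] at e2
    have hfin : ENNReal.ofReal (1/9) ≠ ⊤ := ENNReal.ofReal_ne_top
    have hx : ENNReal.ofReal (1/9) + volume (Rset (K+1) \ I (K+1)) = ENNReal.ofReal (1/9) + 0 := by
      rw [add_zero, add_comm]; exact e2
    exact (ENNReal.add_right_inj hfin).1 hx
  exact measure_union_null hA hB
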